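/- arXiv:1502.02765 — 3 statements merged into one kernel-verified Lean document; each statement's English description precedes it below -/
import Mathlib

section
/- Let ζ ∈ ℂ be a primitive 16th root of unity. If (x, y, t) ∈ ℂ³ satisfies y² = x³ + t³(t⁴ − 1)x and x ≠ 0, then the point σ_AST(x, y, t) = (ζ⁶·(y² − x³)/x², ζ⁹·(x³y − y³)/x³, ζ⁴t) again satisfies the same equation: (ζ⁹(x³y − y³)/x³)² = (ζ⁶(y² − x³)/x²)³ + (ζ⁴t)³((ζ⁴t)⁴ − 1)·(ζ⁶(y² − x³)/x²). -/
/-! On `y² = x³ + a x` the point `(0, 0)` is 2-torsion, and translation by it is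
`(x, y) ↦ (a / x, -a y / x²)`; on the curve this is `(x, y) ↦ ((y² - x³) / x², (x³ y - y³) / x³)`.
`σ_AST` is this translation followed by the twist `(x, y, t) ↦ (u² x, u³ y, ζ⁴ t)` with `u = ζ³`,
which maps the fibre over `t` to the fibre over `ζ⁴ t` because `a(t) = t³ (t⁴ - 1)` satisfies
`a(ζ⁴ t) = u⁴ a(t)` when `ζ¹⁶ = 1`. -/

lemma weierstrass_translate_two_torsion {K : Type*} [Field K] {a x y : K} (hx : x ≠ 0)
    (h : y ^ 2 = x ^ 3 + a * x) :
    ((x ^ 3 * y - y ^ 3) / x ^ 3) ^ 2 =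
      ((y ^ 2 - x ^ 3) / x ^ 2) ^ 3 + a * ((y ^ 2 - x ^ 3) / x ^ 2) := by
  have hX : (y ^ 2 - x ^ 3) / x ^ 2 = a / x := by
    rw [h]; field_simp; ring
  have hY : (x ^ 3 * y - y ^ 3) / x ^ 3 = -a * y / x ^ 2 := by
    rw [show x ^ 3 * y - y ^ 3 = y * (x ^ 3 - y ^ 2) by ring, h]; field_simp; ring
  rw [hX, hY]
  field_simp
  linear_combination a ^ 2 * h

lemma weierstrass_scale {R : Type*} [CommRing R] {a X Y : R} (u : R)
    (h : Y ^ 2 = X ^ 3 + a * X) :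
    (u ^ 3 * Y) ^ 2 = (u ^ 2 * X) ^ 3 + u ^ 4 * a * (u ^ 2 * X) := by
  linear_combination u ^ 6 * h

lemma coeff_mul_root_of_pow_sixteen_eq_one {R : Type*} [CommRing R] {ζ : R} (hζ : ζ ^ 16 = 1)
    (t : R) :
    (ζ ^ 4 * t) ^ 3 * ((ζ ^ 4 * t) ^ 4 - 1) = (ζ ^ 3) ^ 4 * (t ^ 3 * (t ^ 4 - 1)) := by
  linear_combination ζ ^ 12 * t ^ 7 * hζ

/-- The map `σ_AST` of Al Tabbaa–Sarti–Taki preserves the affine Weierstrass model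
`y² = x³ + t³(t⁴ − 1)·x` on the open set `x ≠ 0`. -/
theorem stmt_6 (ζ : ℂ) (hζ : IsPrimitiveRoot ζ 16) (x y t : ℂ) (hx : x ≠ 0)
    (h : y ^ 2 = x ^ 3 + t ^ 3 * (t ^ 4 - 1) * x) :
    (ζ ^ 9 * ((x ^ 3 * y - y ^ 3) / x ^ 3)) ^ 2 =
      (ζ ^ 6 * ((y ^ 2 - x ^ 3) / x ^ 2)) ^ 3 +
        (ζ ^ 4 * t) ^ 3 * ((ζ ^ 4 * t) ^ 4 - 1) * (ζ ^ 6 * ((y ^ 2 - x ^ 3) / x ^ 2)) := by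
  have translated := weierstrass_translate_two_torsion hx h
  rw [coeff_mul_root_of_pow_sixteen_eq_one hζ.pow_eq_one, show ζ ^ 9 = (ζ ^ 3) ^ 3 by ring,
    show ζ ^ 6 = (ζ ^ 3) ^ 2 by ring]
  exact weierstrass_scale (ζ ^ 3) translated
end

section
/- Let ζ ∈ ℂ be a primitive 16th root of unity, let φ(x, y, t) = (ζ⁶x, ζ⁹y, ζ⁴t), and let T(x, y, t) = ((y² − x³)/x², (x³y − y³)/x³, t). Then φ and T commute wherever T is defined: for all (x, y, t) ∈ ℂ³ with x ≠ 0, φ(T(x, y, t)) = T(φ(x, y, t)). (The order-4 fiberwise action commutes with translation by the 2-torsion section, since the 2-torsion section (0,0) is fixed by the fiberwise automorphism.) -/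
/-- The order-4 fiberwise action `φ(x,y,t) = (ζ⁶x, ζ⁹y, ζ⁴t)` commutes with fiberwise
translation `T` by the 2-torsion section `(0,0)` wherever `T` is defined. -/
theorem stmt_9 (ζ : ℂ) (hζ : IsPrimitiveRoot ζ 16)
    (φ T : ℂ × ℂ × ℂ → ℂ × ℂ × ℂ)
    (hφ : ∀ x y t : ℂ, φ (x, y, t) = (ζ ^ 6 * x, ζ ^ 9 * y, ζ ^ 4 * t))
    (hT : ∀ x y t : ℂ,
      T (x, y, t) = ((y ^ 2 - x ^ 3) / x ^ 2, (x ^ 3 * y - y ^ 3) / x ^ 3, t)) :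
    ∀ x y t : ℂ, x ≠ 0 → φ (T (x, y, t)) = T (φ (x, y, t)) := by
  intro x y t hx
  have hz : ζ ≠ 0 := hζ.ne_zero (by norm_num)
  have h16 : ζ ^ 16 = 1 := hζ.pow_eq_one
  rw [hT, hφ, hφ, hT]
  refine Prod.ext ?_ (Prod.ext ?_ rfl)
  · simp only
    field_simp
  · simp only
    field_simp
end

section
/- Let ζ ∈ ℂ be a primitive 16th root of unity, σ(x, y, t) = (ζ⁶x, ζ⁹y, ζ⁴t), and σ_AST(x, y, t) = (ζ⁶(y² − x³)/x², ζ⁹(x³y − y³)/x³, ζ⁴t). If (x, y, t) satisfies y² = x³ + t³(t⁴ − 1)x, x ≠ 0, and t³(t⁴ − 1) ≠ 0, then σ_AST(σ_AST(x, y, t)) = σ(σ(x, y, t)). In other words, the two non-symplectic automorphisms of order 16 are distinct factorizations (square roots) of the same automorphism of order 8. -/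
/-!
On the fibre `y² = x³ + a x` (`a = t³(t⁴ - 1) ≠ 0`), the map `T` is translation by the
2-torsion point `(0, 0)`; using the curve equation it reads `T(x, y) = (a/x, -a y/x²)`, which
makes `T` an involution. Since `(ζ⁹)² = (ζ⁶)³`, the weighted scaling `σ` commutes with `T`, so
`σ_AST² = σTσT = σ²T² = σ²`.
-/

variable {K : Type*} [Field K]

def twoTorsionTranslate : K × K × K → K × K × K
  | (x, y, t) => ((y ^ 2 - x ^ 3) / x ^ 2, (x ^ 3 * y - y ^ 3) / x ^ 3, t)

def weightedScale (α β γ : K) : K × K × K → K × K × K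
  | (x, y, t) => (α * x, β * y, γ * t)

theorem twoTorsionTranslate_weightedScale {α β : K} (γ : K) (hαβ : β ^ 2 = α ^ 3)
    (p : K × K × K) :
    twoTorsionTranslate (weightedScale α β γ p) = weightedScale α β γ (twoTorsionTranslate p) := by
  obtain ⟨x, y, t⟩ := p
  -- the cases `α = 0` and `x = 0` hold only through the convention `_ / 0 = 0`
  rcases eq_or_ne α 0 with rfl | hα
  · obtain rfl : β = 0 := by simpa using hαβ
    simp [twoTorsionTranslate, weightedScale]
  rcases eq_or_ne x 0 with rfl | hx
  · simp [twoTorsionTranslate, weightedScale]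
  simp only [twoTorsionTranslate, weightedScale, Prod.mk.injEq, and_true]
  constructor
  · field_simp
    linear_combination y ^ 2 * hαβ
  · field_simp
    linear_combination -β * y ^ 3 * hαβ

theorem twoTorsionTranslate_of_eq {a x y : K} (t : K) (h : y ^ 2 = x ^ 3 + a * x) (hx : x ≠ 0) :
    twoTorsionTranslate (x, y, t) = (a / x, -(a * y) / x ^ 2, t) := by
  simp only [twoTorsionTranslate, Prod.mk.injEq, and_true]
  constructor
  · field_simp
    linear_combination h
  · field_simp
    linear_combination (-y) * h

theorem twoTorsionTranslate_twoTorsionTranslate {a x y : K} (t : K)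
    (h : y ^ 2 = x ^ 3 + a * x) (hx : x ≠ 0) (ha : a ≠ 0) :
    twoTorsionTranslate (twoTorsionTranslate (x, y, t)) = (x, y, t) := by
  have h' : (-(a * y) / x ^ 2) ^ 2 = (a / x) ^ 3 + a * (a / x) := by
    field_simp
    linear_combination h
  rw [twoTorsionTranslate_of_eq t h hx, twoTorsionTranslate_of_eq t h' (div_ne_zero ha hx)]
  simp only [Prod.mk.injEq, and_true]
  constructor <;> field_simp

theorem stmt_10_general (ζ : ℂ)
    (σ σAST : ℂ × ℂ × ℂ → ℂ × ℂ × ℂ)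
    (hσ : ∀ x y t : ℂ, σ (x, y, t) = (ζ ^ 6 * x, ζ ^ 9 * y, ζ ^ 4 * t))
    (hσAST : ∀ x y t : ℂ, σAST (x, y, t) =
      (ζ ^ 6 * ((y ^ 2 - x ^ 3) / x ^ 2), ζ ^ 9 * ((x ^ 3 * y - y ^ 3) / x ^ 3), ζ ^ 4 * t))
    (x y t : ℂ) (h : y ^ 2 = x ^ 3 + t ^ 3 * (t ^ 4 - 1) * x) (hx : x ≠ 0)
    (ht : t ^ 3 * (t ^ 4 - 1) ≠ 0) :
    σAST (σAST (x, y, t)) = σ (σ (x, y, t)) := by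
  have hσ' : σ = weightedScale (ζ ^ 6) (ζ ^ 9) (ζ ^ 4) := funext fun ⟨x, y, t⟩ => hσ x y t
  have hσAST' : σAST = σ ∘ twoTorsionTranslate := funext fun ⟨x, y, t⟩ => by
    rw [hσAST, Function.comp_apply, twoTorsionTranslate, hσ]
  calc σAST (σAST (x, y, t))
      = σ (twoTorsionTranslate (σ (twoTorsionTranslate (x, y, t)))) := by
        rw [hσAST', Function.comp_apply, Function.comp_apply]
    _ = σ (σ (twoTorsionTranslate (twoTorsionTranslate (x, y, t)))) := by
        rw [hσ', twoTorsionTranslate_weightedScale _ (by ring)]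
    _ = σ (σ (x, y, t)) := by rw [twoTorsionTranslate_twoTorsionTranslate t h hx ht]

/-- The two non-symplectic automorphisms `σ` and `σ_AST` of order 16 are distinct square
roots of the same order 8 automorphism: `σ_AST² = σ²` on the smooth locus. -/
theorem stmt_10 (ζ : ℂ) (hζ : IsPrimitiveRoot ζ 16)
    (σ σAST : ℂ × ℂ × ℂ → ℂ × ℂ × ℂ)
    (hσ : ∀ x y t : ℂ, σ (x, y, t) = (ζ ^ 6 * x, ζ ^ 9 * y, ζ ^ 4 * t))
    (hσAST : ∀ x y t : ℂ, σAST (x, y, t) =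
      (ζ ^ 6 * ((y ^ 2 - x ^ 3) / x ^ 2), ζ ^ 9 * ((x ^ 3 * y - y ^ 3) / x ^ 3), ζ ^ 4 * t))
    (x y t : ℂ) (h : y ^ 2 = x ^ 3 + t ^ 3 * (t ^ 4 - 1) * x) (hx : x ≠ 0)
    (ht : t ^ 3 * (t ^ 4 - 1) ≠ 0) :
    σAST (σAST (x, y, t)) = σ (σ (x, y, t)) :=
  stmt_10_general ζ σ σAST hσ hσAST x y t h hx ht
end
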